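/- Fix q > 0 and X > 8q. Define v(d) = d - d²/(6q) for d ≤ 4q and v(d) = d - d²/(6q) + ((d-4q)/(6q))√d√(d-4q) for d > 4q. Then v(4q) + v(X - 4q) > 2·v(X/2), i.e., splitting an area of length X at distance 4q from one endpoint yields a strictly higher total value than splitting it at the midpoint. -/

import Mathlib

/-! With `a = √X`, `b = √(X - 4q)`, `c = √(X - 8q)`, the gain of the split at `4q` over the
midpoint split is exactly `c³ (2b - a - c) / (12q)`, and `2b > a + c` is strict midpoint
concavity of the square root at `X` and `X - 8q`, whose midpoint is `X - 4q`. -/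

/-- The value of an area of length `d`. -/
noncomputable def areaValue (q d : ℝ) : ℝ :=
  if d ≤ 4 * q then d - d ^ 2 / (6 * q)
  else d - d ^ 2 / (6 * q) + (d - 4 * q) / (6 * q) * Real.sqrt d * Real.sqrt (d - 4 * q)

open Real

lemma Real.sqrt_add_sqrt_lt_two_mul_sqrt_midpoint {x y : ℝ} (hx : 0 ≤ x) (hy : 0 ≤ y)
    (hxy : x ≠ y) : √x + √y < 2 * √((x + y) / 2) := by
  have h := strictConcaveOn_sqrt.2 (Set.mem_Ici.2 hx) (Set.mem_Ici.2 hy) hxy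
    (by norm_num : (0 : ℝ) < 1 / 2) (by norm_num : (0 : ℝ) < 1 / 2) (by norm_num)
  simp only [smul_eq_mul] at h
  rw [show 1 / 2 * x + 1 / 2 * y = (x + y) / 2 by ring] at h
  linarith

lemma areaValue_of_le {q d : ℝ} (h : d ≤ 4 * q) : areaValue q d = d - d ^ 2 / (6 * q) :=
  if_pos h

lemma areaValue_of_lt {q d : ℝ} (h : 4 * q < d) :
    areaValue q d = d - d ^ 2 / (6 * q) + (d - 4 * q) / (6 * q) * √d * √(d - 4 * q) :=
  if_neg h.not_ge

lemma areaValue_split_sub_midpoint {q X : ℝ} (hq : 0 < q) (hX : 8 * q < X) :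
    areaValue q (4 * q) + areaValue q (X - 4 * q) - 2 * areaValue q (X / 2) =
      √(X - 8 * q) ^ 3 * (2 * √(X - 4 * q) - √X - √(X - 8 * q)) / (12 * q) := by
  have hmid : √(X / 2) * √(X / 2 - 4 * q) = √X * √(X - 8 * q) / 2 := by
    rw [← sqrt_mul (by linarith), ← sqrt_mul (by linarith),
      show X / 2 * (X / 2 - 4 * q) = X * (X - 8 * q) / 2 ^ 2 by ring,
      sqrt_div' _ (by positivity), sqrt_sq (by norm_num)]
  have hc : √(X - 8 * q) ^ 2 = X - 8 * q := sq_sqrt (by linarith)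
  rw [areaValue_of_le le_rfl, areaValue_of_lt (by linarith), areaValue_of_lt (by linarith),
    mul_assoc _ (√(X / 2)), hmid, show X - 4 * q - 4 * q = X - 8 * q by ring]
  set c := √(X - 8 * q)
  field_simp
  linear_combination 12 * (√X * c - 2 * √(X - 4 * q) * c + c ^ 2 + (X - 8 * q)) * hc

/-- For `X > 8q`, splitting an area of length `X` at distance `4q` from one endpoint yields a
strictly higher total value than splitting it at the midpoint. -/
theorem split_at_4q_beats_midpoint (q X : ℝ) (hq : 0 < q) (hX : 8 * q < X) :
    areaValue q (4 * q) + areaValue q (X - 4 * q) > 2 * areaValue q (X / 2) := by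
  have hconcave := sqrt_add_sqrt_lt_two_mul_sqrt_midpoint (x := X) (y := X - 8 * q)
    (by linarith) (by linarith) (by linarith)
  rw [show (X + (X - 8 * q)) / 2 = X - 4 * q by ring] at hconcave
  have hc : 0 < √(X - 8 * q) := sqrt_pos.2 (by linarith)
  rw [gt_iff_lt, ← sub_pos, areaValue_split_sub_midpoint hq hX]
  exact div_pos (mul_pos (pow_pos hc 3) (by linarith)) (by positivity)
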